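/- arXiv:2212.08823 — 6 statements merged into one kernel-verified Lean document; each statement's English description precedes it below -/
import Mathlib

section
/- For any real x and integer N ≥ 2, 0 ≤ (Σ_{k=1}^{N-2} e^{kx}) / (Σ_{k=0}^{N-1} e^{kx}) ≤ (N-2)/N. -/
/-!
With `r = exp x` the numerator is `S = r + ⋯ + r ^ (N - 2)` and the denominator is
`1 + S + r ^ (N - 1)`, so the upper bound is equivalent to `2 S ≤ (N - 2) (1 + r ^ (N - 1))`.
This follows by pairing `r ^ k` with `r ^ (N - 1 - k)`: since `1 - r ^ k` and `1 - r ^ (N - 1 - k)`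
have the same sign, `r ^ k + r ^ (N - 1 - k) ≤ 1 + r ^ (N - 1)`.
-/

open Finset

theorem sum_Icc_one_eq_sum_range {M : Type*} [AddCommMonoid M] (f : ℕ → M) (n : ℕ) :
    ∑ k ∈ Icc 1 n, f k = ∑ k ∈ range n, f (k + 1) := by
  rw [range_eq_Ico, sum_Ico_add']
  rfl

theorem sum_range_add_two_pow {R : Type*} [Semiring R] (r : R) (n : ℕ) :
    ∑ k ∈ range (n + 2), r ^ k = 1 + ∑ k ∈ Icc 1 n, r ^ k + r ^ (n + 1) := by
  rw [sum_range_succ, sum_range_succ', sum_Icc_one_eq_sum_range, pow_zero, add_comm 1]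

section OrderedRing

variable {R : Type*} [CommRing R] [LinearOrder R] [IsStrictOrderedRing R] {r : R}

theorem pow_add_pow_le_one_add_pow_add (hr : 0 ≤ r) (a b : ℕ) :
    r ^ a + r ^ b ≤ 1 + r ^ (a + b) := by
  suffices 0 ≤ (1 - r ^ a) * (1 - r ^ b) by rw [pow_add]; linarith
  rcases le_total r 1 with hr1 | hr1
  · exact mul_nonneg (sub_nonneg.2 (pow_le_one₀ hr hr1)) (sub_nonneg.2 (pow_le_one₀ hr hr1))
  · exact mul_nonneg_of_nonpos_of_nonpos (sub_nonpos.2 (one_le_pow₀ hr1))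
      (sub_nonpos.2 (one_le_pow₀ hr1))

theorem two_mul_sum_Icc_one_pow_le (hr : 0 ≤ r) (n : ℕ) :
    2 * ∑ k ∈ Icc 1 n, r ^ k ≤ n * (1 + r ^ (n + 1)) := by
  have hreflect : ∑ k ∈ range n, r ^ (k + 1) = ∑ k ∈ range n, r ^ (n - k) := by
    rw [← sum_range_reflect (fun k ↦ r ^ (k + 1)) n]
    refine sum_congr rfl fun k hk ↦ ?_
    rw [mem_range] at hk
    congr 1
    omega
  calc 2 * ∑ k ∈ Icc 1 n, r ^ k
      = ∑ k ∈ range n, (r ^ (k + 1) + r ^ (n - k)) := by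
        rw [sum_Icc_one_eq_sum_range, two_mul, sum_add_distrib]
        nth_rewrite 2 [hreflect]
        rfl
    _ ≤ #(range n) • (1 + r ^ (n + 1)) := by
        refine sum_le_card_nsmul _ _ _ fun k hk ↦ ?_
        have hkn : k + 1 + (n - k) = n + 1 := by
          rw [mem_range] at hk
          omega
        simpa only [hkn] using pow_add_pow_le_one_add_pow_add hr (k + 1) (n - k)
    _ = n * (1 + r ^ (n + 1)) := by rw [card_range, nsmul_eq_mul]

end OrderedRing

theorem sum_Icc_one_pow_div_sum_range_pow_le {K : Type*} [Field K] [LinearOrder K]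
    [IsStrictOrderedRing K] {r : K} (hr : 0 ≤ r) {N : ℕ} (hN : 2 ≤ N) :
    (∑ k ∈ Icc 1 (N - 2), r ^ k) / ∑ k ∈ range N, r ^ k ≤ ((N : K) - 2) / N := by
  obtain ⟨n, rfl⟩ := Nat.exists_eq_add_of_le' hN
  have hpair := two_mul_sum_Icc_one_pow_le hr n
  rw [Nat.add_sub_cancel, sum_range_add_two_pow r, div_le_div_iff₀ (by positivity) (by positivity)]
  push_cast
  linarith

theorem geom_ratio_bounds (x : ℝ) (N : ℕ) (hN : 2 ≤ N) :
    0 ≤ (∑ k ∈ Finset.Icc 1 (N - 2), Real.exp (k * x)) /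
          (∑ k ∈ Finset.range N, Real.exp (k * x)) ∧
    (∑ k ∈ Finset.Icc 1 (N - 2), Real.exp (k * x)) /
          (∑ k ∈ Finset.range N, Real.exp (k * x)) ≤ ((N : ℝ) - 2) / N := by
  simp_rw [Real.exp_nat_mul]
  exact ⟨by positivity, sum_Icc_one_pow_div_sum_range_pow_le (Real.exp_pos x).le hN⟩
end

section
/- For every real x and integer N ≥ 2, 1 ≤ (1+e^x)(Σ_{k=0}^{N-2} e^{kx}) / (Σ_{k=0}^{N-1} e^{kx}) ≤ 2(N-1)/N. -/
/-!
Put `t = exp x` and `S m = ∑ k < m, t ^ k`. Since `t * S (N - 1) = S N - 1`, the numerator is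
`S N + (S (N - 1) - 1) ≥ S N`. The upper bound reduces to `2 * S N ≤ N * (1 + t ^ (N - 1))`,
which follows by pairing `t ^ k` with `t ^ (N - 1 - k)`: `(1 - t ^ k) * (1 - t ^ (N - 1 - k)) ≥ 0`.
-/

open Finset

section GeomSum

variable {R : Type*} [CommRing R] [LinearOrder R] [IsStrictOrderedRing R] {t : R}

theorem pow_add_pow_sub_le_one_add_pow (ht : 0 ≤ t) {k n : ℕ} (hk : k ≤ n) :
    t ^ k + t ^ (n - k) ≤ 1 + t ^ n := by
  have hprod : 0 ≤ (1 - t ^ k) * (1 - t ^ (n - k)) := by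
    rcases le_total t 1 with h | h
    · exact mul_nonneg (sub_nonneg.2 (pow_le_one₀ ht h)) (sub_nonneg.2 (pow_le_one₀ ht h))
    · exact mul_nonneg_of_nonpos_of_nonpos (sub_nonpos.2 (one_le_pow₀ h))
        (sub_nonpos.2 (one_le_pow₀ h))
  rw [← pow_mul_pow_sub t hk]
  linarith [hprod]

theorem two_mul_geom_sum_le (ht : 0 ≤ t) (n : ℕ) :
    2 * ∑ k ∈ range (n + 1), t ^ k ≤ (n + 1) * (1 + t ^ n) := by
  have hreflect : ∑ k ∈ range (n + 1), t ^ (n - k) = ∑ k ∈ range (n + 1), t ^ k :=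
    sum_range_reflect (t ^ ·) (n + 1)
  calc 2 * ∑ k ∈ range (n + 1), t ^ k
      = ∑ k ∈ range (n + 1), (t ^ k + t ^ (n - k)) := by
        rw [sum_add_distrib, hreflect, two_mul]
    _ ≤ ∑ _k ∈ range (n + 1), (1 + t ^ n) :=
        sum_le_sum fun k hk => pow_add_pow_sub_le_one_add_pow ht (mem_range_succ_iff.1 hk)
    _ = (n + 1) * (1 + t ^ n) := by rw [sum_const, card_range, nsmul_eq_mul]; push_cast; ring

theorem one_le_geom_sum (ht : 0 ≤ t) (n : ℕ) : 1 ≤ ∑ k ∈ range (n + 1), t ^ k := by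
  simpa using single_le_sum (fun k _ => pow_nonneg ht k) (mem_range.2 n.succ_pos)

theorem geom_sum_succ_le_one_add_mul (ht : 0 ≤ t) (n : ℕ) :
    ∑ k ∈ range (n + 2), t ^ k ≤ (1 + t) * ∑ k ∈ range (n + 1), t ^ k := by
  rw [geom_sum_succ (n := n + 1)]
  linarith [one_le_geom_sum ht n]

theorem add_two_mul_one_add_mul_geom_sum_le (ht : 0 ≤ t) (n : ℕ) :
    (n + 2) * ((1 + t) * ∑ k ∈ range (n + 1), t ^ k) ≤
      2 * (n + 1) * ∑ k ∈ range (n + 2), t ^ k := by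
  have hpair := two_mul_geom_sum_le ht (n + 1)
  have hshift : t * ∑ k ∈ range (n + 1), t ^ k = ∑ k ∈ range (n + 2), t ^ k - 1 := by
    rw [geom_sum_succ (n := n + 1)]; ring
  rw [geom_sum_succ' (n := n + 1)] at hpair hshift ⊢
  push_cast at hpair
  linear_combination hpair + (n + 2) * hshift

end GeomSum

theorem w_factor_bounds (x : ℝ) (N : ℕ) (hN : 2 ≤ N) :
    1 ≤ (1 + Real.exp x) * (∑ k ∈ Finset.range (N - 1), Real.exp (k * x)) /
          (∑ k ∈ Finset.range N, Real.exp (k * x)) ∧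
    (1 + Real.exp x) * (∑ k ∈ Finset.range (N - 1), Real.exp (k * x)) /
          (∑ k ∈ Finset.range N, Real.exp (k * x)) ≤ 2 * ((N : ℝ) - 1) / N := by
  obtain ⟨n, rfl⟩ : ∃ n, N = n + 2 := ⟨N - 2, by omega⟩
  have ht := (Real.exp_pos x).le
  have hpos : 0 < ∑ k ∈ range (n + 2), Real.exp x ^ k := geom_sum_pos ht (by omega)
  simp only [Real.exp_nat_mul, show n + 2 - 1 = n + 1 from rfl, Nat.cast_add, Nat.cast_ofNat,
    add_sub_assoc, show (2 : ℝ) - 1 = 1 by norm_num]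
  constructor
  · rw [one_le_div hpos]
    exact geom_sum_succ_le_one_add_mul ht n
  · rw [div_le_div_iff₀ hpos (by positivity), mul_comm]
    exact add_two_mul_one_add_mul_geom_sum_le ht n
end

section
/- Let a, b > 0 and for each integer N ≥ 2 define H_{N,a,b} = Σ_{j=1}^{N-1} (1/(j(N-j))) min(j/a, (N-j)/b). Then lim_{N→∞} H_{N,a,b} = (1/a)·ln((a+b)/b) + (1/b)·ln((a+b)/a). -/
/-!
With `K = ⌊a N / (a + b)⌋`, the minimum is `j / a` exactly for `j ≤ K`, so the summand is
`1 / (a (N - j))` for `j ≤ K` and `1 / (b j)` for `j > K`. Hence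
`H_{N,a,b} = (H_{N-1} - H_{N-1-K}) / a + (H_{N-1} - H_K) / b` with ordinary harmonic numbers.
Since `H_n - log n → γ`, a difference `H_{d_n} - H_{c_n}` tends to the logarithm of `lim d_n / c_n`,
and here `K / N → a / (a + b)`.
-/

open Filter Finset Real Topology

lemma sum_Ioc_one_div_eq_harmonic_sub {m n : ℕ} (h : m ≤ n) :
    ∑ i ∈ Ioc m n, (1 / i : ℝ) = harmonic n - harmonic m := by
  induction n, h using Nat.le_induction with
  | base => simp
  | succ n hmn ih =>
    rw [sum_Ioc_succ_top hmn, ih, harmonic_succ]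
    push_cast
    ring

lemma sum_Ioc_one_div_sub_eq_harmonic_sub {k N : ℕ} (h : k < N) :
    ∑ j ∈ Ioc 0 k, 1 / ((N : ℝ) - j) = harmonic (N - 1) - harmonic (N - 1 - k) := by
  induction k with
  | zero => simp
  | succ k ih =>
    have hsucc : N - 1 - k = N - 1 - (k + 1) + 1 := by omega
    have hcast : ((N - 1 - (k + 1) + 1 : ℕ) : ℝ) = N - (k + 1 : ℕ) := by
      rw [← hsucc, show N - 1 - k = N - (k + 1) by omega, Nat.cast_sub h.le]
    rw [sum_Ioc_succ_top k.zero_le, ih (by omega), hsucc, harmonic_succ, ← hcast]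
    push_cast
    ring

lemma one_div_mul_min_div_eq_of_le {a b x y : ℝ} (ha : 0 < a) (hb : 0 < b) (hx : 0 < x)
    (hy : 0 < y) (h : b * x ≤ a * y) :
    1 / (x * y) * min (x / a) (y / b) = 1 / a * (1 / y) := by
  rw [min_eq_left ((div_le_div_iff₀ ha hb).2 (by linarith))]
  field_simp

lemma one_div_mul_min_div_eq_of_ge {a b x y : ℝ} (ha : 0 < a) (hb : 0 < b) (hx : 0 < x)
    (hy : 0 < y) (h : a * y ≤ b * x) :
    1 / (x * y) * min (x / a) (y / b) = 1 / b * (1 / x) := by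
  rw [min_eq_right ((div_le_div_iff₀ hb ha).2 (by linarith))]
  field_simp

lemma le_floor_div_add_mul_iff {a b : ℝ} (ha : 0 < a) (hb : 0 < b) (N j : ℕ) :
    j ≤ ⌊a / (a + b) * N⌋₊ ↔ b * j ≤ a * (N - j) := by
  rw [Nat.le_floor_iff (by positivity), div_mul_eq_mul_div, le_div_iff₀ (by positivity)]
  constructor <;> intro h <;> linarith

lemma floor_mul_lt_self {t : ℝ} (ht : t < 1) {N : ℕ} (hN : 0 < N) : ⌊t * N⌋₊ < N :=
  (Nat.floor_lt' hN.ne').2 (by nlinarith [show (0 : ℝ) < N by exact_mod_cast hN])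

lemma sum_one_div_mul_min_div_eq_harmonic {a b : ℝ} (ha : 0 < a) (hb : 0 < b) {N : ℕ}
    (hN : 0 < N) :
    ∑ j ∈ Icc 1 (N - 1), 1 / ((j : ℝ) * (N - j)) * min (j / a) ((N - j) / b) =
      1 / a * (harmonic (N - 1) - harmonic (N - 1 - ⌊a / (a + b) * N⌋₊)) +
        1 / b * (harmonic (N - 1) - harmonic ⌊a / (a + b) * N⌋₊) := by
  set K := ⌊a / (a + b) * N⌋₊
  have hKN : K < N := floor_mul_lt_self ((div_lt_one (by positivity)).2 (by linarith)) hN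
  have hIcc : Icc 1 (N - 1) = Ioc 0 (N - 1) := Icc_add_one_left_eq_Ioc 0 (N - 1)
  rw [hIcc, ← sum_Ioc_consecutive _ K.zero_le (by omega : K ≤ N - 1),
    ← sum_Ioc_one_div_sub_eq_harmonic_sub hKN, ← sum_Ioc_one_div_eq_harmonic_sub (by omega),
    mul_sum, mul_sum]
  congr 1
  · refine sum_congr rfl fun j hj => ?_
    rw [mem_Ioc] at hj
    have hjN : (j : ℝ) < N := by exact_mod_cast hj.2.trans_lt hKN
    exact one_div_mul_min_div_eq_of_le ha hb (by exact_mod_cast hj.1) (by linarith)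
      ((le_floor_div_add_mul_iff ha hb N j).1 hj.2)
  · refine sum_congr rfl fun j hj => ?_
    rw [mem_Ioc] at hj
    have hjN : (j : ℝ) < N := by exact_mod_cast (show j < N by omega)
    exact one_div_mul_min_div_eq_of_ge ha hb (by exact_mod_cast K.zero_le.trans_lt hj.1)
      (by linarith) (not_le.1 ((le_floor_div_add_mul_iff ha hb N j).not.1 hj.1.not_ge)).le

lemma tendsto_harmonic_sub_harmonic {c d : ℕ → ℕ} {r s : ℝ} (hr : 0 < r) (hs : 0 < s)
    (hc : Tendsto (fun n => (c n : ℝ) / n) atTop (𝓝 r))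
    (hd : Tendsto (fun n => (d n : ℝ) / n) atTop (𝓝 s)) :
    Tendsto (fun n => (harmonic (d n) : ℝ) - harmonic (c n)) atTop (𝓝 (log (s / r))) := by
  have hc' : Tendsto c atTop atTop :=
    tendsto_natCast_atTop_iff.1 (Tendsto.num tendsto_natCast_atTop_atTop hr hc)
  have hd' : Tendsto d atTop atTop :=
    tendsto_natCast_atTop_iff.1 (Tendsto.num tendsto_natCast_atTop_atTop hs hd)
  have key := ((tendsto_harmonic_sub_log.comp hd').sub (tendsto_harmonic_sub_log.comp hc')).add
    ((hd.div hc hr.ne').log (div_pos hs hr).ne')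
  rw [sub_self, zero_add] at key
  refine key.congr' ?_
  filter_upwards [hc'.eventually_gt_atTop 0, hd'.eventually_gt_atTop 0, eventually_gt_atTop 0]
    with n hcn hdn hn
  rw [Function.comp_apply, Function.comp_apply, Pi.div_apply,
    div_div_div_cancel_right₀ (by positivity),
    log_div (by positivity) (by positivity)]
  ring

lemma tendsto_natCast_pred_div : Tendsto (fun N : ℕ => ((N - 1 : ℕ) : ℝ) / N) atTop (𝓝 1) := by
  have h := (tendsto_const_nhds (x := (1 : ℝ))).sub tendsto_one_div_atTop_nhds_zero_nat
  rw [sub_zero] at h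
  refine h.congr' ?_
  filter_upwards [eventually_gt_atTop 0] with N hN
  rw [Nat.cast_pred hN]
  field_simp

theorem HNab_limit (a b : ℝ) (ha : 0 < a) (hb : 0 < b) :
    Filter.Tendsto
      (fun N : ℕ => ∑ j ∈ Finset.Icc 1 (N - 1),
        (1 / ((j : ℝ) * ((N : ℝ) - j))) * min ((j : ℝ) / a) (((N : ℝ) - j) / b))
      Filter.atTop
      (nhds ((1 / a) * Real.log ((a + b) / b) + (1 / b) * Real.log ((a + b) / a))) := by
  have hab : 0 < a + b := by linarith
  have ht : a / (a + b) < 1 := (div_lt_one hab).2 (by linarith)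
  set K : ℕ → ℕ := fun N => ⌊a / (a + b) * N⌋₊
  have hK : Tendsto (fun N => (K N : ℝ) / N) atTop (𝓝 (a / (a + b))) :=
    (tendsto_nat_floor_mul_div_atTop (by positivity)).comp tendsto_natCast_atTop_atTop
  have hNK : Tendsto (fun N => ((N - 1 - K N : ℕ) : ℝ) / N) atTop (𝓝 (b / (a + b))) := by
    rw [show b / (a + b) = 1 - a / (a + b) by field_simp; ring]
    refine (tendsto_natCast_pred_div.sub hK).congr' ?_
    filter_upwards [eventually_gt_atTop 0] with N hN
    have : K N ≤ N - 1 := by have : K N < N := floor_mul_lt_self ht hN; omega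
    rw [Nat.cast_sub this, sub_div]
  have key := ((tendsto_harmonic_sub_harmonic (by positivity) one_pos hNK
    tendsto_natCast_pred_div).const_mul (1 / a)).add
      ((tendsto_harmonic_sub_harmonic (by positivity) one_pos hK
        tendsto_natCast_pred_div).const_mul (1 / b))
  rw [one_div_div, one_div_div] at key
  refine key.congr' ?_
  filter_upwards [eventually_gt_atTop 0] with N hN
  exact (sum_one_div_mul_min_div_eq_harmonic ha hb hN).symm
end

section
/- For integer N ≥ 3 and reals a, b > 0, max over 0 ≤ i ≤ N-2 of min((i+1)/a, (N-i-1)/b)/((i+1)(N-i-1)) is at most 1/(min(a,b)·⌊(N-1)/2⌋). -/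
theorem M_upper_bound (N : ℕ) (hN : 3 ≤ N) (a b : ℝ) (ha : 0 < a) (hb : 0 < b) :
    ∀ i : ℕ, i ≤ N - 2 →
      min (((i : ℝ) + 1) / a) (((N : ℝ) - i - 1) / b) /
          (((i : ℝ) + 1) * ((N : ℝ) - i - 1)) ≤
        1 / (min a b * (((N - 1) / 2 : ℕ) : ℝ)) := by
  intro i hi
  have hN1 : (3:ℝ) ≤ (N:ℝ) := by exact_mod_cast hN
  set x : ℝ := (i:ℝ) + 1 with hxdef
  set y : ℝ := (N:ℝ) - i - 1 with hydef
  have hx : 0 < x := by positivity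
  have hi2 : (i:ℕ) + 2 ≤ N := by omega
  have hi2' : (i:ℝ) + 2 ≤ (N:ℝ) := by exact_mod_cast hi2
  have hy : (1:ℝ) ≤ y := by simp only [hydef]; linarith
  have hy0 : 0 < y := by linarith
  set m := min a b with hm
  have hm0 : 0 < m := lt_min ha hb
  set k : ℕ := (N-1)/2 with hk
  have hk1 : 1 ≤ k := by omega
  have hkr : (1:ℝ) ≤ (k:ℝ) := by exact_mod_cast hk1
  have hk0 : 0 < (k:ℝ) := by linarith
  have hkle : 2 * (k:ℝ) ≤ (N:ℝ) - 1 := by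
    have h2 : 2 * k ≤ N - 1 := by omega
    have h2' : (2 * k : ℕ) ≤ ((N - 1 : ℕ) : ℕ) := h2
    have : ((2*k:ℕ):ℝ) ≤ ((N-1:ℕ):ℝ) := by exact_mod_cast h2'
    have hc : ((N-1:ℕ):ℝ) = (N:ℝ) - 1 := by
      have : 1 ≤ N := by omega
      push_cast [Nat.cast_sub this]; ring
    push_cast at this; linarith [hc ▸ this]
  have hxy : x + y = (N:ℝ) := by simp only [hxdef, hydef]; ring
  have hxa : min (x/a) (y/b) * m ≤ x := by
    calc min (x/a) (y/b) * m ≤ (x/a) * m :=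
          mul_le_mul_of_nonneg_right (min_le_left _ _) hm0.le
      _ ≤ (x/a) * a := mul_le_mul_of_nonneg_left (min_le_left a b) (by positivity)
      _ = x := div_mul_cancel₀ _ ha.ne'
  have hyb : min (x/a) (y/b) * m ≤ y := by
    calc min (x/a) (y/b) * m ≤ (y/b) * m :=
          mul_le_mul_of_nonneg_right (min_le_right _ _) hm0.le
      _ ≤ (y/b) * b := mul_le_mul_of_nonneg_left (min_le_right a b) (by positivity)
      _ = y := div_mul_cancel₀ _ hb.ne'
  have hkmax : (k:ℝ) ≤ max x y := by
    rcases le_total x y with h | h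
    · rw [max_eq_right h]; nlinarith
    · rw [max_eq_left h]; nlinarith
  rw [div_le_div_iff₀ (by positivity) (by positivity)]
  calc min (x/a) (y/b) * (m * (k:ℝ)) = (min (x/a) (y/b) * m) * (k:ℝ) := by ring
    _ ≤ min x y * (k:ℝ) := mul_le_mul_of_nonneg_right (le_min hxa hyb) hk0.le
    _ ≤ min x y * max x y :=
        mul_le_mul_of_nonneg_left hkmax (le_min hx.le hy0.le)
    _ = x * y := min_mul_max _ _
    _ = 1 * (x * y) := by ring
end

section
/- Let N ≥ 3 and let a_0, …, a_{N-2} be positive reals with a_j = a_{N-2-j} for all j. Define the polynomial P(u) = (1+u)[(Σ_{j=0}^{N-2} a_j u^j)(Σ_{j=1}^{N-1} j u^{j-1}) − (Σ_{j=1}^{N-2} a_j j u^{j-1})(Σ_{j=0}^{N-1} u^j)] − (Σ_{j=0}^{N-2} a_j u^j)(Σ_{j=0}^{N-1} u^j). Then P has degree 2N−4 with leading coefficient a_{N-3} > 0, and its coefficients p_k satisfy p_k = −p_{2N-4-k} for 0 ≤ k ≤ 2N−4; in particular p_{N-2} = 0 and P(1) = 0. -/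
/-!
With `S = ∑_{j ≤ N-2} a_j X^j` and `G = ∑_{j ≤ N-1} X^j` we have `P = (1 + X) W - S G`, where
`W = S G' - S' G` is the Wronskian. `S` and `G` are palindromic of degrees `N - 2` and `N - 1`, and
reversing a palindromic `p` of degree `d` turns `p'` into `d p - X p'` (in degree `d - 1`). Hence the
reversal of `W` in degree `2N - 4` is `S G - X W`, so the reversal of `P` in degree `2N - 3` is
`-X P`. Reading off coefficients gives `p_{2N-3} = 0` and `p_k = -p_{2N-4-k}`; the top coefficient
is then `-p_0 = a_1 = a_{N-3}`.
-/

open Polynomial Finset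

namespace Polynomial
variable {R : Type*}

section Semiring
variable [Semiring R]

theorem coeff_sum_range_C_mul_X_pow (f : ℕ → R) (n k : ℕ) :
    (∑ j ∈ range n, C (f j) * X ^ j).coeff k = if k < n then f k else 0 := by
  simp [finsetSum_coeff]

theorem natDegree_sum_range_C_mul_X_pow_le (f : ℕ → R) (n : ℕ) :
    (∑ j ∈ range (n + 1), C (f j) * X ^ j).natDegree ≤ n :=
  natDegree_le_iff_coeff_eq_zero.2 fun k hk => by
    rw [coeff_sum_range_C_mul_X_pow, if_neg (by omega)]

theorem reflect_sum_range_C_mul_X_pow {f : ℕ → R} {n : ℕ} (hf : ∀ j ≤ n, f (n - j) = f j) :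
    reflect n (∑ j ∈ range (n + 1), C (f j) * X ^ j) = ∑ j ∈ range (n + 1), C (f j) * X ^ j := by
  ext k
  rw [coeff_reflect, coeff_sum_range_C_mul_X_pow, coeff_sum_range_C_mul_X_pow]
  rcases le_or_gt k n with hk | hk
  · rw [revAt_le hk, if_pos (by omega), if_pos (by omega), hf k hk]
  · rw [revAt_eq_self_of_lt hk]

theorem derivative_sum_range_C_mul_X_pow (f : ℕ → R) (n : ℕ) :
    derivative (∑ j ∈ range (n + 1), C (f j) * X ^ j) =
      ∑ j ∈ Icc 1 n, C (f j * j) * X ^ (j - 1) := by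
  rw [derivative_sum, range_eq_Ico, sum_eq_sum_Ico_succ_bot (by omega : 0 < n + 1), zero_add,
    Ico_add_one_right_eq_Icc, pow_zero, mul_one, derivative_C, zero_add]
  simp only [derivative_C_mul_X_pow]

end Semiring

section CommRing
variable [CommRing R]

theorem coeff_X_mul_derivative (p : R[X]) (k : ℕ) :
    (X * derivative p).coeff k = k * p.coeff k := by
  cases k with
  | zero => simp
  | succ k => rw [coeff_X_mul, coeff_derivative]; push_cast; ring

theorem reflect_derivative_of_reflect_eq_self {p : R[X]} {M : ℕ} (hdeg : p.natDegree ≤ M + 1)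
    (hp : reflect (M + 1) p = p) :
    reflect M (derivative p) = C ((M : R) + 1) * p - X * derivative p := by
  ext k
  rw [coeff_reflect, coeff_sub, coeff_C_mul, coeff_X_mul_derivative, coeff_derivative]
  rcases le_or_gt k M with hk | hk
  · have hpal : p.coeff (M + 1 - k) = p.coeff k := by
      rw [← revAt_le (by omega), ← coeff_reflect, hp]
    rw [revAt_le hk, show M - k + 1 = M + 1 - k by omega, hpal, Nat.cast_sub hk]
    ring
  · rw [revAt_eq_self_of_lt hk, coeff_eq_zero_of_natDegree_lt (by omega : p.natDegree < k + 1)]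
    rcases (Nat.succ_le_of_lt hk).eq_or_lt with rfl | hgt
    · push_cast; ring
    · rw [coeff_eq_zero_of_natDegree_lt (by omega : p.natDegree < k)]; ring

theorem natDegree_wronskian_le {p q : R[X]} {a b : ℕ} (hp : p.natDegree ≤ a + 1)
    (hq : q.natDegree ≤ b + 1) : (wronskian p q).natDegree ≤ a + b + 1 := by
  have hp' := natDegree_derivative_le p
  have hq' := natDegree_derivative_le q
  refine (natDegree_sub_le _ _).trans (max_le ?_ ?_)
  · exact natDegree_mul_le.trans (by omega)
  · exact natDegree_mul_le.trans (by omega)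

theorem reflect_wronskian_of_reflect_eq_self {p q : R[X]} {a b : ℕ}
    (hp : p.natDegree ≤ a + 1) (hq : q.natDegree ≤ b + 1)
    (hpr : reflect (a + 1) p = p) (hqr : reflect (b + 1) q = q) :
    reflect (a + b + 1) (wronskian p q) = C ((b : R) - a) * p * q - X * wronskian p q := by
  have hp' : (derivative p).natDegree ≤ a := (natDegree_derivative_le p).trans (by omega)
  have hq' : (derivative q).natDegree ≤ b := (natDegree_derivative_le q).trans (by omega)
  rw [wronskian, reflect_sub, show a + b + 1 = a + 1 + b by ring, reflect_mul _ _ hp hq',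
    show a + 1 + b = a + (b + 1) by ring, reflect_mul _ _ hp' hq, hpr, hqr,
    reflect_derivative_of_reflect_eq_self hp hpr, reflect_derivative_of_reflect_eq_self hq hqr]
  simp only [map_sub, map_add, map_natCast, map_one]
  ring

theorem reflect_one_add_X_mul_wronskian_sub_mul {p q : R[X]} {a : ℕ}
    (hp : p.natDegree ≤ a + 1) (hq : q.natDegree ≤ a + 2)
    (hpr : reflect (a + 1) p = p) (hqr : reflect (a + 2) q = q) :
    reflect (2 * a + 3) ((1 + X) * wronskian p q - p * q) =
      -(X * ((1 + X) * wronskian p q - p * q)) := by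
  have hX : (1 + X : R[X]).natDegree ≤ 1 := (natDegree_add_le _ _).trans (by simp [natDegree_X_le])
  have hW := reflect_wronskian_of_reflect_eq_self hp hq hpr hqr
  rw [reflect_sub, show 2 * a + 3 = 1 + (a + (a + 1) + 1) by ring,
    reflect_mul _ _ hX (natDegree_wronskian_le hp hq), hW,
    show 1 + (a + (a + 1) + 1) = (a + 1) + (a + 2) by ring, reflect_mul _ _ hp hq, hpr, hqr,
    reflect_add, reflect_one, reflect_one_X, Nat.cast_add_one, add_sub_cancel_left, map_one]
  ring

/-- Above `M + 1` the hypothesis reads `p_{k+1} = -p_k`, starting from `p_{M+1} = 0`. -/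
theorem natDegree_le_of_reflect_eq_neg_X_mul {p : R[X]} {M : ℕ}
    (h : reflect (M + 1) p = -(X * p)) : p.natDegree ≤ M := by
  have hstep : ∀ k, M + 1 ≤ k → p.coeff k = 0 := by
    intro k hk
    induction k, hk using Nat.le_induction with
    | base => simpa using congr_arg (coeff · 0) h
    | succ k hk ih =>
      have := congr_arg (coeff · (k + 1)) h
      simp only [coeff_reflect, revAt_eq_self_of_lt (by omega : M + 1 < k + 1), coeff_neg,
        coeff_X_mul] at this
      rw [this, ih, neg_zero]
  exact natDegree_le_iff_coeff_eq_zero.2 fun k hk => hstep k hk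

theorem coeff_eq_neg_coeff_of_reflect_eq_neg_X_mul {p : R[X]} {M k : ℕ}
    (h : reflect (M + 1) p = -(X * p)) (hk : k ≤ M) : p.coeff k = -p.coeff (M - k) := by
  have := congr_arg (coeff · (M - k + 1)) h
  simp only [coeff_reflect, coeff_neg, coeff_X_mul] at this
  rwa [revAt_le (by omega), show M + 1 - (M - k + 1) = k by omega] at this

theorem eval_one_eq_zero_of_reflect_eq_neg_X_mul [IsAddTorsionFree R] {p : R[X]} {M : ℕ}
    (h : reflect (M + 1) p = -(X * p)) : p.eval 1 = 0 := by
  have hdeg : p.natDegree ≤ M + 1 := (natDegree_le_of_reflect_eq_neg_X_mul h).trans M.le_succ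
  have := @eval₂_reflect_mul_pow _ _ _ _ (RingHom.id R) 1 invertibleOne (M + 1) p hdeg
  simp only [h, invOf_one, one_pow, mul_one, eval₂_id] at this
  simpa [self_eq_neg] using this.symm

end CommRing
end Polynomial

open Polynomial in
theorem P_antisymmetric (N : ℕ) (hN : 3 ≤ N) (m A : ℕ → ℝ)
    (hm_pos : ∀ j : ℕ, j ≤ N - 2 → 0 < m j)
    (hm_sym : ∀ j : ℕ, j ≤ N - 2 → m j = m (N - 2 - j))
    (hA : ∀ j : ℕ, j ≤ N - 2 → A j = (∑ i ∈ Finset.range (N - 1), m i) + m j)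
    (P : Polynomial ℝ)
    (hP : P = (1 + X) *
        ((∑ j ∈ Finset.range (N - 1), C (A j) * X ^ j) *
            (∑ j ∈ Finset.Icc 1 (N - 1), C (j : ℝ) * X ^ (j - 1)) -
          (∑ j ∈ Finset.Icc 1 (N - 2), C (A j * j) * X ^ (j - 1)) *
            (∑ j ∈ Finset.range N, X ^ j)) -
      (∑ j ∈ Finset.range (N - 1), C (A j) * X ^ j) *
        (∑ j ∈ Finset.range N, X ^ j)) :
    P.natDegree = 2 * N - 4 ∧
    P.coeff (2 * N - 4) = A (N - 3) ∧ 0 < A (N - 3) ∧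
    (∀ k : ℕ, k ≤ 2 * N - 4 → P.coeff k = -P.coeff (2 * N - 4 - k)) ∧
    P.coeff (N - 2) = 0 ∧ P.eval 1 = 0 := by
  obtain ⟨n, rfl⟩ : ∃ n, N = n + 3 := ⟨N - 3, by omega⟩
  simp only [show n + 3 - 1 = n + 2 by omega, show n + 3 - 2 = n + 1 by omega,
    show 2 * (n + 3) - 4 = 2 * n + 2 by omega, show n + 3 - 3 = n by omega]
    at hm_pos hm_sym hA hP ⊢
  set S : ℝ[X] := ∑ j ∈ range (n + 2), C (A j) * X ^ j
  have hG : ∑ j ∈ range (n + 3), (X : ℝ[X]) ^ j = ∑ j ∈ range (n + 3), C 1 * X ^ j := by simp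
  have hA_symm : ∀ j ≤ n + 1, A (n + 1 - j) = A j := fun j hj => by
    rw [hA j hj, hA _ (by omega), hm_sym j hj]
  have hP_wronskian : P = (1 + X) * wronskian S (∑ j ∈ range (n + 3), C 1 * X ^ j) -
      S * ∑ j ∈ range (n + 3), C 1 * X ^ j := by
    rw [hP, hG, wronskian, derivative_sum_range_C_mul_X_pow, derivative_sum_range_C_mul_X_pow]
    simp
  have hrefl : reflect (2 * n + 3) P = -(X * P) := hP_wronskian ▸
    reflect_one_add_X_mul_wronskian_sub_mul (natDegree_sum_range_C_mul_X_pow_le _ _)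
      (natDegree_sum_range_C_mul_X_pow_le _ _) (reflect_sum_range_C_mul_X_pow hA_symm)
      (reflect_sum_range_C_mul_X_pow fun _ _ => rfl)
  have hcoeff_zero : P.coeff 0 = -A 1 := by
    rw [hP_wronskian]
    simp [S, wronskian, mul_coeff_zero, coeff_derivative]
  have hA_pos : 0 < A n := by
    rw [hA n (by omega)]
    have hsum : 0 < ∑ i ∈ range (n + 2), m i :=
      sum_pos (fun i hi => hm_pos i (by have := mem_range.1 hi; omega)) ⟨0, by simp⟩
    linarith [hm_pos n (by omega)]
  have htop : P.coeff (2 * n + 2) = A n := by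
    rw [coeff_eq_neg_coeff_of_reflect_eq_neg_X_mul hrefl le_rfl, Nat.sub_self, hcoeff_zero,
      neg_neg, ← hA_symm n (by omega), show n + 1 - n = 1 by omega]
  have hmid := coeff_eq_neg_coeff_of_reflect_eq_neg_X_mul hrefl (k := n + 1) (by omega)
  rw [show 2 * n + 2 - (n + 1) = n + 1 by omega] at hmid
  refine ⟨le_antisymm (natDegree_le_of_reflect_eq_neg_X_mul hrefl)
      (le_natDegree_of_ne_zero (htop ▸ hA_pos.ne')), htop, hA_pos,
    fun k hk => coeff_eq_neg_coeff_of_reflect_eq_neg_X_mul hrefl hk, by linarith,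
    eval_one_eq_zero_of_reflect_eq_neg_X_mul hrefl⟩
end

section
/- Let β > 0, θ > 0, N ≥ 2, B > c > 0, and set δ_N = −(c + B/(N-1)) and x_N = β(θ + δ_N). Then, provided θ ≠ c, lim_{N→∞} (1 + e^{x_N}·(1 − e^{(N-2)x_N})/(1 − e^{N x_N})) = 1 + e^{−β|θ−c|}. -/
open Filter Real

lemma aux_key (n t : ℝ) (h : Real.exp (n * t) ≠ 1) :
    Real.exp t * (1 - Real.exp ((n - 2) * t)) / (1 - Real.exp (n * t))
      = (Real.exp ((1 - n) * t) - Real.exp (-t)) / (Real.exp (-(n * t)) - 1) := by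
  have ha := Real.exp_ne_zero t
  have hE := Real.exp_ne_zero (n * t)
  have h1 : (1 : ℝ) - Real.exp (n * t) ≠ 0 := sub_ne_zero.mpr (Ne.symm h)
  have h2 : Real.exp (-(n * t)) - 1 ≠ 0 := by
    rw [Real.exp_neg]
    exact sub_ne_zero.mpr (by simpa [inv_eq_one] using h)
  have h2' : (Real.exp (n * t))⁻¹ - 1 ≠ 0 := sub_ne_zero.mpr (by simpa [inv_eq_one] using h)
  rw [show (n - 2) * t = n * t - t - t by ring, show (1 - n) * t = t - n * t by ring,
    Real.exp_sub, Real.exp_sub, Real.exp_sub, Real.exp_neg, Real.exp_neg]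
  rw [div_eq_div_iff h1 h2']
  field_simp

lemma aux_main (x : ℕ → ℝ) (L : ℝ) (hx : Tendsto x atTop (nhds L)) (hL : L ≠ 0) :
    Tendsto (fun N : ℕ =>
        1 + Real.exp (x N) * (1 - Real.exp (((N : ℝ) - 2) * x N)) /
          (1 - Real.exp ((N : ℝ) * x N))) atTop (nhds (1 + Real.exp (-|L|))) := by
  have hNtop : Tendsto (fun N : ℕ => (N : ℝ)) atTop atTop := tendsto_natCast_atTop_atTop
  have hN2top : Tendsto (fun N : ℕ => (N : ℝ) - 2) atTop atTop :=
    tendsto_atTop_add_const_right _ (-2) hNtop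
  rcases hL.lt_or_gt with hL0 | hL0
  · -- L < 0
    have hNx : Tendsto (fun N : ℕ => (N : ℝ) * x N) atTop atBot :=
      Tendsto.atTop_mul_neg hL0 hNtop hx
    have hN2x : Tendsto (fun N : ℕ => ((N : ℝ) - 2) * x N) atTop atBot :=
      Tendsto.atTop_mul_neg hL0 hN2top hx
    have h1 : Tendsto (fun N : ℕ => Real.exp (((N : ℝ) - 2) * x N)) atTop (nhds 0) :=
      Real.tendsto_exp_atBot.comp hN2x
    have h2 : Tendsto (fun N : ℕ => Real.exp ((N : ℝ) * x N)) atTop (nhds 0) :=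
      Real.tendsto_exp_atBot.comp hNx
    have hex : Tendsto (fun N : ℕ => Real.exp (x N)) atTop (nhds (Real.exp L)) :=
      (Real.continuous_exp.tendsto L).comp hx
    have hnum : Tendsto (fun N : ℕ => Real.exp (x N) * (1 - Real.exp (((N : ℝ) - 2) * x N)))
        atTop (nhds (Real.exp L * (1 - 0))) := hex.mul (tendsto_const_nhds.sub h1)
    have hden : Tendsto (fun N : ℕ => 1 - Real.exp ((N : ℝ) * x N)) atTop (nhds (1 - 0)) :=
      tendsto_const_nhds.sub h2
    have := Filter.Tendsto.add (tendsto_const_nhds : Tendsto (fun _ : ℕ => (1:ℝ)) atTop (nhds 1))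
      (hnum.div hden (by norm_num))
    have heq : (1 : ℝ) + Real.exp L * (1 - 0) / (1 - 0) = 1 + Real.exp (-|L|) := by
      rw [abs_of_neg hL0]; ring_nf
    rw [heq] at this
    simpa [mul_div_assoc] using this
  · -- L > 0
    have hNx : Tendsto (fun N : ℕ => (N : ℝ) * x N) atTop atTop :=
      Tendsto.atTop_mul_pos hL0 hNtop hx
    have hnegNx : Tendsto (fun N : ℕ => -((N : ℝ) * x N)) atTop atBot :=
      tendsto_neg_atTop_atBot.comp hNx
    have h1Nx : Tendsto (fun N : ℕ => (1 - (N : ℝ)) * x N) atTop atBot := by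
      have : Tendsto (fun N : ℕ => x N + -((N : ℝ) * x N)) atTop atBot :=
        hx.add_atBot hnegNx
      refine this.congr fun N => by ring
    have h1 : Tendsto (fun N : ℕ => Real.exp ((1 - (N : ℝ)) * x N)) atTop (nhds 0) :=
      Real.tendsto_exp_atBot.comp h1Nx
    have h2 : Tendsto (fun N : ℕ => Real.exp (-((N : ℝ) * x N))) atTop (nhds 0) :=
      Real.tendsto_exp_atBot.comp hnegNx
    have hex : Tendsto (fun N : ℕ => Real.exp (-x N)) atTop (nhds (Real.exp (-L))) :=
      (Real.continuous_exp.tendsto (-L)).comp hx.neg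
    have hg : Tendsto (fun N : ℕ =>
        1 + (Real.exp ((1 - (N : ℝ)) * x N) - Real.exp (-x N)) /
          (Real.exp (-((N : ℝ) * x N)) - 1)) atTop
        (nhds (1 + (0 - Real.exp (-L)) / (0 - 1))) :=
      tendsto_const_nhds.add ((h1.sub hex).div (h2.sub tendsto_const_nhds) (by norm_num))
    have heq : (1 : ℝ) + (0 - Real.exp (-L)) / (0 - 1) = 1 + Real.exp (-|L|) := by
      rw [abs_of_pos hL0]; ring_nf
    rw [heq] at hg
    refine hg.congr' ?_
    have hxpos : ∀ᶠ N : ℕ in atTop, 0 < x N := hx.eventually (eventually_gt_nhds hL0)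
    filter_upwards [hxpos, eventually_ge_atTop 1] with N hxN hN1
    have hNxpos : 0 < (N : ℝ) * x N := by
      have : (1 : ℝ) ≤ (N : ℝ) := by exact_mod_cast hN1
      positivity
    have hne : Real.exp ((N : ℝ) * x N) ≠ 1 := by
      rw [← Real.exp_zero]
      exact ne_of_gt (Real.exp_lt_exp.mpr hNxpos)
    rw [← aux_key (N : ℝ) (x N) hne]

theorem infinite_population_limit_DG (β θ B c : ℝ) (hβ : 0 < β) (hθ : 0 < θ)
    (hc : 0 < c) (hBc : c < B) (hθc : θ ≠ c) :
    Filter.Tendsto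
      (fun N : ℕ =>
        let x := β * (θ - (c + B / ((N : ℝ) - 1)))
        1 + Real.exp x * (1 - Real.exp (((N : ℝ) - 2) * x)) /
              (1 - Real.exp ((N : ℝ) * x)))
      Filter.atTop (nhds (1 + Real.exp (-β * |θ - c|))) := by
  have hNtop : Tendsto (fun N : ℕ => (N : ℝ) - 1) atTop atTop :=
    tendsto_atTop_add_const_right _ (-1) tendsto_natCast_atTop_atTop
  have hB0 : Tendsto (fun N : ℕ => B / ((N : ℝ) - 1)) atTop (nhds 0) := by
    simpa [div_eq_mul_inv] using hNtop.inv_tendsto_atTop.const_mul B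
  have hx : Tendsto (fun N : ℕ => β * (θ - (c + B / ((N : ℝ) - 1)))) atTop
      (nhds (β * (θ - c))) := by
    have h0 : Tendsto (fun N : ℕ => c + B / ((N : ℝ) - 1)) atTop (nhds (c + 0)) :=
      tendsto_const_nhds.add hB0
    have h1' : Tendsto (fun N : ℕ => θ - (c + B / ((N : ℝ) - 1))) atTop (nhds (θ - (c + 0))) :=
      tendsto_const_nhds.sub h0
    simpa using h1'.const_mul β
  have hL : β * (θ - c) ≠ 0 :=
    mul_ne_zero (ne_of_gt hβ) (sub_ne_zero.mpr hθc)
  have habs : -β * |θ - c| = -|β * (θ - c)| := by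
    rw [abs_mul, abs_of_pos hβ]; ring
  rw [habs]
  exact aux_main _ _ hx hL
end
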